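/- arXiv:1508.00493 — 2 statements merged into one kernel-verified Lean document; each statement's English description precedes it below -/
import Mathlib

section
/- The subgroup G consists exactly of those elements of F whose normal form has even length; equivalently, G is the kernel of the homomorphism F → ℤ/2ℤ sending x_0 and x_1 to the generator. In particular, G has index 2 in F. -/
set_option maxHeartbeats 1000000

noncomputable section

/-- The unit interval `[0,1]` as a type. -/
abbrev I : Type := Set.Icc (0:ℝ) 1

/-- The underlying function of the generator `x₀` of Thompson's group `F`. -/
def x0fun (t : ℝ) : ℝ := if t ≤ 1/4 then 2*t else if t ≤ 1/2 then t + 1/4 else t/2 + 1/2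

/-- The inverse of `x0fun`. -/
def x0inv (t : ℝ) : ℝ := if t ≤ 1/2 then t/2 else if t ≤ 3/4 then t - 1/4 else 2*t - 1

/-- The underlying function of the generator `x₁` of Thompson's group `F`. -/
def x1fun (t : ℝ) : ℝ :=
  if t ≤ 1/2 then t else if t ≤ 5/8 then 2*t - 1/2 else if t ≤ 3/4 then t + 1/8 else t/2 + 1/2

/-- The inverse of `x1fun`. -/
def x1inv (t : ℝ) : ℝ :=
  if t ≤ 1/2 then t else if t ≤ 3/4 then t/2 + 1/4 else if t ≤ 7/8 then t - 1/8 else 2*t - 1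

/-- The generator `x₀` of Thompson's group `F`, as a bijection of `[0,1]`. -/
def x₀ : Equiv.Perm I where
  toFun t := ⟨x0fun t.1, by
    obtain ⟨h0, h1⟩ := Set.mem_Icc.mp t.2
    simp only [Set.mem_Icc, x0fun]
    split_ifs <;> constructor <;> linarith⟩
  invFun t := ⟨x0inv t.1, by
    obtain ⟨h0, h1⟩ := Set.mem_Icc.mp t.2
    simp only [Set.mem_Icc, x0inv]
    split_ifs <;> constructor <;> linarith⟩
  left_inv t := by
    obtain ⟨h0, h1⟩ := Set.mem_Icc.mp t.2
    apply Subtype.ext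
    show x0inv (x0fun t.1) = t.1
    simp only [x0fun, x0inv]
    split_ifs <;> linarith
  right_inv t := by
    obtain ⟨h0, h1⟩ := Set.mem_Icc.mp t.2
    apply Subtype.ext
    show x0fun (x0inv t.1) = t.1
    simp only [x0fun, x0inv]
    split_ifs <;> linarith

/-- The generator `x₁` of Thompson's group `F`, as a bijection of `[0,1]`. -/
def x₁ : Equiv.Perm I where
  toFun t := ⟨x1fun t.1, by
    obtain ⟨h0, h1⟩ := Set.mem_Icc.mp t.2
    simp only [Set.mem_Icc, x1fun]
    split_ifs <;> constructor <;> linarith⟩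
  invFun t := ⟨x1inv t.1, by
    obtain ⟨h0, h1⟩ := Set.mem_Icc.mp t.2
    simp only [Set.mem_Icc, x1inv]
    split_ifs <;> constructor <;> linarith⟩
  left_inv t := by
    obtain ⟨h0, h1⟩ := Set.mem_Icc.mp t.2
    apply Subtype.ext
    show x1inv (x1fun t.1) = t.1
    simp only [x1fun, x1inv]
    split_ifs <;> linarith
  right_inv t := by
    obtain ⟨h0, h1⟩ := Set.mem_Icc.mp t.2
    apply Subtype.ext
    show x1fun (x1inv t.1) = t.1
    simp only [x1fun, x1inv]
    split_ifs <;> linarith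

/-- Composition in Thompson's group `F` is from left to right: the product `f·g` in the paper
is the function `t ↦ g (f t)`.  In Lean, `Equiv.Perm` multiplication is composition from right
to left: `(f * g) t = f (g t)`.  Hence a paper product `a₁ a₂ ⋯ aₙ` corresponds to the Lean
product `aₙ * ⋯ * a₂ * a₁`.

`x i` is the standard generator `x_i` of Thompson's group `F`: here `x_0, x_1` are the explicit
piecewise-linear maps, and for `i ≥ 1`, `x_{i+1} = x_0^{-i} x_1 x_0^{i}` (left-to-right
composition), which in Lean's convention is `x₀ ^ i * x₁ * (x₀ ^ i)⁻¹`. -/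
def x (i : ℕ) : Equiv.Perm I := if i = 0 then x₀ else x₀ ^ (i-1) * x₁ * (x₀ ^ (i-1))⁻¹

/-- Thompson's group `F`, realized as the group of increasing piecewise-linear homeomorphisms of
`[0,1]` with dyadic breakpoints and slopes powers of 2; it is generated by `x_0` and `x_1`. -/
def F : Subgroup (Equiv.Perm I) := Subgroup.closure {x 0, x 1}

/-- The subgroup `G = ⟨x_0x_2, x_1x_2⟩` of `F` (products written left-to-right, so
`x_0x_2` is the Lean element `x 2 * x 0`). -/
def G : Subgroup (Equiv.Perm I) := Subgroup.closure {x 2 * x 0, x 2 * x 1}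

/-- Jones' subgroup `F⃗ = ⟨x_0x_1, x_1x_2, x_2x_3⟩` of `F` (products written left-to-right). -/
def JonesF : Subgroup (Equiv.Perm I) := Subgroup.closure {x 1 * x 0, x 2 * x 1, x 3 * x 2}

lemma x_mem_F (i : ℕ) : x i ∈ F := by
  have h0 : x 0 ∈ F := Subgroup.subset_closure (by simp)
  have h1 : x 1 ∈ F := Subgroup.subset_closure (by simp)
  have hx0 : x₀ ∈ F := by simpa [x] using h0
  have hx1 : x₁ ∈ F := by simpa [x] using h1
  rcases Nat.eq_zero_or_pos i with h | h
  · subst h; exact h0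
  · have : x i = x₀ ^ (i-1) * x₁ * (x₀ ^ (i-1))⁻¹ := by
      simp [x, Nat.pos_iff_ne_zero.mp h]
    rw [this]
    exact mul_mem (mul_mem (pow_mem hx0 _) hx1) (inv_mem (pow_mem hx0 _))

lemma y0_mem_G : x 2 * x 0 ∈ G := Subgroup.subset_closure (by simp)

lemma y1_mem_G : x 2 * x 1 ∈ G := Subgroup.subset_closure (by simp)

/-- The length `|w|` of an element of `F`: the minimal `n` such that `w` is a product of `n`
elements of `{x_i^{±1} : i ≥ 0}`.  This equals the length of the normal form of `w`. -/
def len (w : Equiv.Perm I) : ℕ :=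
  sInf {n | ∃ l : List (Equiv.Perm I), l.length = n ∧
    (∀ a ∈ l, ∃ i : ℕ, a = x i ∨ a = (x i)⁻¹) ∧ l.prod = w}

/-- The element of `F` given by the positive word `x_{i_1} x_{i_2} ⋯ x_{i_n}` (composition from
left to right), where `l = [i_1, i_2, …, i_n]`.  Since Lean's multiplication of permutations is
composition from right to left, this is the Lean product of the reversed list of letters. -/
def pp (l : List ℕ) : Equiv.Perm I := ((l.map x).reverse).prod

/-- `l = [i_1, …, i_n]` encodes a *block*: a positive normal form `x_{i_1}⋯x_{i_n}`
(so `i_1 ≤ ⋯ ≤ i_n`) with `i_1 ≠ i_n` and `i_j < i_1 + j` for all `j = 1, …, n`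
(here with 0-based indexing: `l[k] < l[0] + k + 1`). -/
def IsBlock (l : List ℕ) : Prop :=
  l ≠ [] ∧ l.Pairwise (· ≤ ·) ∧ l.headI ≠ l.getLastD 0 ∧
    ∀ k < l.length, l.getD k 0 < l.headI + k + 1

/-- The double coset `F⃗ a F⃗` of Jones' subgroup.  (As a set this does not depend on the
composition convention, since `u, v` range over all of `F⃗`.) -/
def dCoset (a : Equiv.Perm I) : Set (Equiv.Perm I) :=
  {w | ∃ u ∈ JonesF, ∃ v ∈ JonesF, w = v * a * u}

/-- A real number is dyadic if it has the form `a / 2^n` with `a, n` natural numbers. -/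
def IsDyadic (α : ℝ) : Prop := ∃ (a : ℕ) (n : ℕ), α = a / 2^n

/-- The subgroup of all permutations fixing every point of `U`. -/
def fixing (U : Set ℝ) : Subgroup (Equiv.Perm I) where
  carrier := {g | ∀ t : I, (t : ℝ) ∈ U → g t = t}
  one_mem' := fun _ _ => rfl
  mul_mem' := by
    intro a b ha hb t ht
    simp only [Equiv.Perm.mul_apply]
    rw [hb t ht, ha t ht]
  inv_mem' := by
    intro a ha t ht
    conv_lhs => rw [← ha t ht]
    exact a.symm_apply_apply t

/-- `H_U`: the stabilizer in `F` of the finite set `U ⊂ (0,1)`, i.e. the subgroup of all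
elements of `F` fixing every point of `U`. -/
def HU (U : Set ℝ) : Subgroup (Equiv.Perm I) := F ⊓ fixing U

/-!
Measure an element of `F` by the exponent `k` of its slope `2 ^ k` at `1`.  This is a
homomorphism to `ℤ`, and every `x_i` has slope `1/2` at `1`, so modulo `2` it counts the
length of any word for the element.  The generators of `G` are words of length two, so `G`
lies in the kernel.  Conversely, a subgroup containing `a²`, `ab` and `ba` contains every
even-length word in `a, b`; for `a = x₀`, `b = x₁` the first two are products of the
generators of `G`, and `x₁ x₀ ∈ G` follows from the single relation of `F` that
`x₀ x₁⁻¹` (supported in `[0, 3/4]`) commutes with `x₂` (supported in `[3/4, 1]`).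
-/

namespace Subgroup

variable {M : Type*} [Group M]

theorem exists_list_of_mem_closure {s : Set M} {w : M} (hw : w ∈ closure s) :
    ∃ l : List M, (∀ y ∈ l, y ∈ s ∨ y⁻¹ ∈ s) ∧ l.prod = w := by
  rw [← mem_toSubmonoid, closure_toSubmonoid] at hw
  exact Submonoid.exists_list_of_mem_closure hw

theorem list_prod_mem_of_even_length {H : Subgroup M} {a b : M}
    (haa : a * a ∈ H) (hab : a * b ∈ H) (hba : b * a ∈ H) :
    ∀ l : List M, (∀ y ∈ l, y ∈ ({a, b} : Set M) ∨ y⁻¹ ∈ ({a, b} : Set M)) →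
      Even l.length → l.prod ∈ H
  | [], _, _ => H.one_mem
  | [_], _, he => absurd he (by simp)
  | y :: z :: l, hl, he => by
    -- every letter lies in the coset `a H = H a`
    have coset : ∀ y, (y ∈ ({a, b} : Set M) ∨ y⁻¹ ∈ ({a, b} : Set M)) →
        a⁻¹ * y ∈ H ∧ y * a⁻¹ ∈ H := by
      rintro y ((rfl | rfl) | (hy | hy))
      · simp
      · exact ⟨by simpa [mul_assoc] using mul_mem (inv_mem haa) hab,
          by simpa [mul_assoc] using mul_mem hba (inv_mem haa)⟩
      · obtain rfl := inv_eq_iff_eq_inv.mp hy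
        simpa using inv_mem haa
      · obtain rfl := inv_eq_iff_eq_inv.mp hy
        exact ⟨by simpa using inv_mem hba, by simpa using inv_mem hab⟩
    have hyz : y * z ∈ H := by
      have h := mul_mem (mul_mem (coset y (hl y (by simp))).2 haa)
        (coset z (hl z (by simp))).1
      simpa [mul_assoc] using h
    rw [List.prod_cons, List.prod_cons, ← mul_assoc]
    refine mul_mem hyz (list_prod_mem_of_even_length haa hab hba l
      (fun w hw => hl w (by simp [hw])) ?_)
    simpa [Nat.even_add_one] using he

end Subgroup

section Generators

lemma x_zero : x 0 = x₀ := by simp [x]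

lemma x_one : x 1 = x₁ := by simp [x]

lemma x_two : x 2 = x 0 * x 1 * (x 0)⁻¹ := by simp [x]

lemma x₁_apply_of_le {t : I} (ht : (t : ℝ) ≤ 1/2) : x₁ t = t :=
  Subtype.ext (if_pos ht)

lemma x₀_apply_eq_x₁_apply {t : I} (ht : 3/4 ≤ (t : ℝ)) : x₀ t = x₁ t := by
  apply Subtype.ext
  change x0fun t = x1fun t
  simp only [x0fun, x1fun]
  split_ifs <;> linarith

lemma disjoint_x_one_inv_mul_x_zero_x_two : ((x 1)⁻¹ * x 0).Disjoint (x 2) := by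
  intro t
  rcases le_total (t : ℝ) (3/4) with ht | ht
  · right
    have h : ((x₀⁻¹ t : I) : ℝ) ≤ 1/2 := by
      change x0inv t ≤ 1/2
      simp only [x0inv]
      split_ifs <;> linarith
    rw [x_two, x_zero, x_one, Equiv.Perm.mul_apply, Equiv.Perm.mul_apply, x₁_apply_of_le h]
    exact x₀.apply_symm_apply t
  · left
    simp [x_zero, x_one, x₀_apply_eq_x₁_apply ht]

lemma x_zero_mul_x_one_mem_G : x 0 * x 1 ∈ G := by
  simpa [x_two] using y0_mem_G

lemma x_zero_mul_x_zero_mem_G : x 0 * x 0 ∈ G := by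
  have h := mul_mem (mul_mem x_zero_mul_x_one_mem_G (inv_mem y1_mem_G)) x_zero_mul_x_one_mem_G
  rw [x_two] at h
  convert h using 1
  group

lemma x_one_mul_x_zero_mem_G : x 1 * x 0 ∈ G := by
  set a := x 0
  set b := x 1
  have hu : a * b ∈ G := x_zero_mul_x_one_mem_G
  have hv : a * b * a⁻¹ * b ∈ G := x_two ▸ y1_mem_G
  have hc : Commute (b⁻¹ * a) (a * b * a⁻¹) := x_two ▸ disjoint_x_one_inv_mul_x_zero_x_two.commute
  have key : b * a = (a * b) * (a * b * a⁻¹ * b)⁻¹ * (a * b)⁻¹ * (a * b * a⁻¹ * b) * (a * b) :=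
    calc b * a = a * ((a * b * a⁻¹) * (b⁻¹ * a))⁻¹ * a * b := by group
      _ = a * ((b⁻¹ * a) * (a * b * a⁻¹))⁻¹ * a * b := by rw [hc.eq]
      _ = _ := by group
  rw [key]
  exact mul_mem (mul_mem (mul_mem (mul_mem hu (inv_mem hv)) (inv_mem hu)) hv) hu

end Generators

section SlopeAtOne

def HasLogSlopeAtOne (w : Equiv.Perm I) (k : ℤ) : Prop :=
  ∃ δ > 0, ∀ t : I, 1 - (t : ℝ) ≤ δ → 1 - (w t : ℝ) = 2 ^ k * (1 - t)

namespace HasLogSlopeAtOne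

variable {w v : Equiv.Perm I} {k l : ℤ}

theorem unique (hk : HasLogSlopeAtOne w k) (hl : HasLogSlopeAtOne w l) : k = l := by
  obtain ⟨δ, hδ, hk⟩ := hk
  obtain ⟨δ', hδ', hl⟩ := hl
  set ε := min (min δ δ') 1
  have hε : 0 < ε := by positivity
  have hεδ : ε ≤ δ := (min_le_left _ _).trans (min_le_left _ _)
  have hεδ' : ε ≤ δ' := (min_le_left _ _).trans (min_le_right _ _)
  let t : I := ⟨1 - ε, by linarith [min_le_right (min δ δ') 1], by linarith⟩
  have h := (hk t (by simpa [t] using hεδ)).symm.trans (hl t (by simpa [t] using hεδ'))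
  simp only [t, sub_sub_cancel] at h
  exact zpow_right_injective₀ two_pos (by norm_num) (mul_right_cancel₀ hε.ne' h)

theorem one : HasLogSlopeAtOne 1 0 :=
  ⟨1, one_pos, fun _ _ => by simp⟩

theorem mul (hw : HasLogSlopeAtOne w k) (hv : HasLogSlopeAtOne v l) :
    HasLogSlopeAtOne (w * v) (k + l) := by
  obtain ⟨δw, hδw, hw⟩ := hw
  obtain ⟨δv, hδv, hv⟩ := hv
  have h2l : (0 : ℝ) < 2 ^ l := by positivity
  refine ⟨min δv (δw / 2 ^ l), by positivity, fun t ht => ?_⟩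
  have hvt := hv t (ht.trans (min_le_left _ _))
  have hvt_near : 1 - (v t : ℝ) ≤ δw := by
    rw [hvt, ← le_div_iff₀' h2l]
    exact ht.trans (min_le_right _ _)
  rw [Equiv.Perm.mul_apply, hw _ hvt_near, hvt, zpow_add₀ two_ne_zero, mul_assoc]

theorem inv (hw : HasLogSlopeAtOne w k) : HasLogSlopeAtOne w⁻¹ (-k) := by
  obtain ⟨δ, hδ, hw⟩ := hw
  have h2k : (0 : ℝ) < 2 ^ k := by positivity
  refine ⟨2 ^ k * min δ 1, by positivity, fun s hs => ?_⟩
  -- `w⁻¹ s` is not yet known to be near `1`, so it is exhibited explicitly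
  have hr : 2 ^ (-k) * (1 - (s : ℝ)) ≤ min δ 1 := by
    rw [zpow_neg, inv_mul_le_iff₀ h2k]
    exact hs
  have hr0 : 0 ≤ 2 ^ (-k) * (1 - (s : ℝ)) := mul_nonneg (by positivity) (sub_nonneg.mpr s.2.2)
  let t : I := ⟨1 - 2 ^ (-k) * (1 - s), by linarith [min_le_right δ 1], by linarith⟩
  have hwt : w t = s := by
    have hkk : (2 : ℝ) ^ k * 2 ^ (-k) = 1 := by
      rw [← zpow_add₀ two_ne_zero, add_neg_cancel, zpow_zero]
    have h := hw t (by simpa [t] using hr.trans (min_le_left _ _))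
    rw [show 1 - (t : ℝ) = 2 ^ (-k) * (1 - s) from sub_sub_cancel _ _, ← mul_assoc, hkk,
      one_mul] at h
    exact Subtype.ext (by linarith)
  rw [show w⁻¹ s = t by simp [← hwt]]
  exact sub_sub_cancel _ _

theorem pow (hw : HasLogSlopeAtOne w k) (n : ℕ) : HasLogSlopeAtOne (w ^ n) (n * k) := by
  induction n with
  | zero => simpa using one
  | succ n ih => simpa [pow_succ, add_mul] using ih.mul hw

theorem conj (hw : HasLogSlopeAtOne w k) (hv : HasLogSlopeAtOne v l) :
    HasLogSlopeAtOne (v * w * v⁻¹) k := by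
  simpa using (hv.mul hw).mul hv.inv

end HasLogSlopeAtOne

lemma hasLogSlopeAtOne_x₀ : HasLogSlopeAtOne x₀ (-1) := by
  refine ⟨1/4, by norm_num, fun t ht => ?_⟩
  change 1 - x0fun t = _
  rw [x0fun, if_neg (by linarith), if_neg (by linarith), zpow_neg_one]
  ring

lemma hasLogSlopeAtOne_x₁ : HasLogSlopeAtOne x₁ (-1) := by
  refine ⟨1/8, by norm_num, fun t ht => ?_⟩
  change 1 - x1fun t = _
  rw [x1fun, if_neg (by linarith), if_neg (by linarith), if_neg (by linarith), zpow_neg_one]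
  ring

lemma hasLogSlopeAtOne_x (i : ℕ) : HasLogSlopeAtOne (x i) (-1) := by
  rcases i with _ | i
  · exact x_zero ▸ hasLogSlopeAtOne_x₀
  · simpa [x] using hasLogSlopeAtOne_x₁.conj (hasLogSlopeAtOne_x₀.pow i)

lemma exists_hasLogSlopeAtOne_list_prod {l : List (Equiv.Perm I)}
    (hl : ∀ s ∈ l, HasLogSlopeAtOne s (-1) ∨ HasLogSlopeAtOne s⁻¹ (-1)) :
    ∃ k : ℤ, HasLogSlopeAtOne l.prod k ∧ (k : ZMod 2) = l.length := by
  induction l with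
  | nil => exact ⟨0, HasLogSlopeAtOne.one, by simp⟩
  | cons s l ih =>
    obtain ⟨k, hk, hkl⟩ := ih fun s' hs' => hl s' (List.mem_cons_of_mem s hs')
    rcases hl s List.mem_cons_self with hs | hs
    · refine ⟨-1 + k, hs.mul hk, ?_⟩
      rw [Int.cast_add, hkl, Int.cast_neg, ZMod.neg_eq_self_mod_two, List.length_cons,
        Nat.cast_succ, Int.cast_one, add_comm]
    · refine ⟨1 + k, by simpa using hs.inv.mul hk, ?_⟩
      rw [Int.cast_add, hkl, List.length_cons, Nat.cast_succ, Int.cast_one, add_comm]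

end SlopeAtOne

section Parity

lemma hasLogSlopeAtOne_of_mem_generators {s : Equiv.Perm I}
    (hs : s ∈ ({x 0, x 1} : Set (Equiv.Perm I))) : HasLogSlopeAtOne s (-1) := by
  rcases hs with rfl | rfl <;> exact hasLogSlopeAtOne_x _

lemma exists_hasLogSlopeAtOne_of_mem_F {w : Equiv.Perm I} (hw : w ∈ F) :
    ∃ k, HasLogSlopeAtOne w k := by
  obtain ⟨l, hl, rfl⟩ := Subgroup.exists_list_of_mem_closure hw
  obtain ⟨k, hk, -⟩ := exists_hasLogSlopeAtOne_list_prod fun s hs =>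
    (hl s hs).imp hasLogSlopeAtOne_of_mem_generators hasLogSlopeAtOne_of_mem_generators
  exact ⟨k, hk⟩

def slopeParity : F →* Multiplicative (ZMod 2) :=
  MonoidHom.mk' (fun w => .ofAdd ((exists_hasLogSlopeAtOne_of_mem_F w.2).choose : ZMod 2))
    fun a b => by
      have ha := (exists_hasLogSlopeAtOne_of_mem_F a.2).choose_spec
      have hb := (exists_hasLogSlopeAtOne_of_mem_F b.2).choose_spec
      have hab := (exists_hasLogSlopeAtOne_of_mem_F (a * b).2).choose_spec
      rw [← ofAdd_add, ← Int.cast_add, hab.unique (ha.mul hb)]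

lemma slopeParity_eq {w : F} {k : ℤ} (hw : HasLogSlopeAtOne w k) :
    slopeParity w = .ofAdd (k : ZMod 2) := by
  rw [← (exists_hasLogSlopeAtOne_of_mem_F w.2).choose_spec.unique hw]
  rfl

lemma slopeParity_x (i : ℕ) : slopeParity ⟨x i, x_mem_F i⟩ = .ofAdd 1 := by
  rw [slopeParity_eq (hasLogSlopeAtOne_x i), Int.cast_neg, ZMod.neg_eq_self_mod_two,
    Int.cast_one]

lemma slopeParity_surjective : Function.Surjective slopeParity := by
  intro z
  obtain rfl | rfl : z = 1 ∨ z = .ofAdd 1 := by revert z; decide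
  exacts [⟨1, map_one _⟩, ⟨_, slopeParity_x 0⟩]

lemma slopeParity_eq_of_list_prod_eq (w : F) {l : List (Equiv.Perm I)}
    (hl : ∀ s ∈ l, HasLogSlopeAtOne s (-1) ∨ HasLogSlopeAtOne s⁻¹ (-1)) (hw : l.prod = w) :
    slopeParity w = .ofAdd (l.length : ZMod 2) := by
  obtain ⟨k, hk, hkl⟩ := exists_hasLogSlopeAtOne_list_prod hl
  rw [slopeParity_eq (hw ▸ hk), hkl]

lemma exists_list_length_eq_len {w : Equiv.Perm I} (hw : w ∈ F) :
    ∃ l : List (Equiv.Perm I), l.length = len w ∧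
      (∀ a ∈ l, ∃ i : ℕ, a = x i ∨ a = (x i)⁻¹) ∧ l.prod = w := by
  obtain ⟨l, hl, hlw⟩ := Subgroup.exists_list_of_mem_closure hw
  have hne : {n | ∃ l : List (Equiv.Perm I), l.length = n ∧
      (∀ a ∈ l, ∃ i : ℕ, a = x i ∨ a = (x i)⁻¹) ∧ l.prod = w}.Nonempty := by
    refine ⟨l.length, l, rfl, fun s hs => ?_, hlw⟩
    rcases hl s hs with (rfl | rfl) | (h | h)
    exacts [⟨0, .inl rfl⟩, ⟨1, .inl rfl⟩, ⟨0, .inr (inv_eq_iff_eq_inv.mp h)⟩,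
      ⟨1, .inr (inv_eq_iff_eq_inv.mp h)⟩]
  exact Nat.sInf_mem hne

lemma slopeParity_eq_len (w : F) : slopeParity w = .ofAdd (len w : ZMod 2) := by
  obtain ⟨l, hlen, hl, hlw⟩ := exists_list_length_eq_len w.2
  rw [← hlen]
  refine slopeParity_eq_of_list_prod_eq w (fun s hs => ?_) hlw
  obtain ⟨i, rfl | rfl⟩ := hl s hs
  exacts [.inl (hasLogSlopeAtOne_x i), .inr (by simpa using hasLogSlopeAtOne_x i)]

lemma G_le_map_ker_slopeParity : G ≤ slopeParity.ker.map F.subtype := by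
  have h : ∀ i j, x i * x j ∈ slopeParity.ker.map F.subtype := fun i j =>
    ⟨⟨x i, x_mem_F i⟩ * ⟨x j, x_mem_F j⟩, by
      rw [SetLike.mem_coe, MonoidHom.mem_ker, map_mul, slopeParity_x, slopeParity_x]
      decide, rfl⟩
  rw [G, Subgroup.closure_le]
  rintro _ (rfl | rfl) <;> exact h _ _

lemma mem_G_iff_mem_ker_slopeParity (w : F) : (w : Equiv.Perm I) ∈ G ↔ w ∈ slopeParity.ker := by
  constructor
  · intro hw
    obtain ⟨v, hv, hvw⟩ := G_le_map_ker_slopeParity hw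
    rwa [Subtype.ext hvw] at hv
  · intro hw
    obtain ⟨l, hl, hlw⟩ := Subgroup.exists_list_of_mem_closure w.2
    have he : Even l.length := by
      rwa [MonoidHom.mem_ker, slopeParity_eq_of_list_prod_eq w (fun s hs => (hl s hs).imp
        hasLogSlopeAtOne_of_mem_generators hasLogSlopeAtOne_of_mem_generators) hlw,
        ofAdd_eq_one, ZMod.natCast_eq_zero_iff_even] at hw
    rw [← hlw]
    exact Subgroup.list_prod_mem_of_even_length x_zero_mul_x_zero_mem_G x_zero_mul_x_one_mem_G
      x_one_mul_x_zero_mem_G l hl he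

end Parity

/-- `G` consists exactly of those elements of `F` whose normal form has even length;
equivalently, `G` is the kernel of the homomorphism `F → ℤ/2ℤ` sending `x_0` and `x_1` to the
generator.  In particular, `G` has index 2 in `F`. -/
theorem stmt1 :
    (∀ w ∈ F, (w ∈ G ↔ Even (len w))) ∧
    (∃ φ : ↥F →* Multiplicative (ZMod 2),
      φ ⟨x 0, x_mem_F 0⟩ = Multiplicative.ofAdd 1 ∧
      φ ⟨x 1, x_mem_F 1⟩ = Multiplicative.ofAdd 1 ∧
      ∀ w : ↥F, ((w : Equiv.Perm I) ∈ G ↔ w ∈ φ.ker)) ∧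
    G.relIndex F = 2 := by
  refine ⟨fun w hw => ?_, ⟨slopeParity, slopeParity_x 0, slopeParity_x 1,
    mem_G_iff_mem_ker_slopeParity⟩, ?_⟩
  · rw [mem_G_iff_mem_ker_slopeParity ⟨w, hw⟩, MonoidHom.mem_ker, slopeParity_eq_len,
      ofAdd_eq_one, ZMod.natCast_eq_zero_iff_even]
  · have hker : G.subgroupOf F = slopeParity.ker := by
      ext w
      exact mem_G_iff_mem_ker_slopeParity w
    rw [Subgroup.relIndex, hker, Subgroup.index_ker,
      MonoidHom.range_eq_top.mpr slopeParity_surjective, Subgroup.card_top,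
      Nat.card_eq_fintype_card]
    rfl
end
end

section
/- Let B = x_{i_1}⋯x_{i_n} be a block and let j ≥ 0 with j ≠ i_1. Then there exist integers k ≥ 0 and r ≥ 0 such that x_j^{-1} B = B' x_r^{-1} holds in F, where B' = x_{i_1+k}⋯x_{i_n+k} is the translation of B by k. -/
set_option maxHeartbeats 1000000

noncomputable section

lemma x_succ {n : ℕ} (hn : n ≠ 0) : x (n + 1) = x₀ * x n * x₀⁻¹ := by
  obtain ⟨m, rfl⟩ := Nat.exists_eq_add_one_of_ne_zero hn
  simp only [x, Nat.add_one_ne_zero, if_false, Nat.add_sub_cancel, pow_succ']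
  group

lemma x₀_conj_mem_fixing {g : Equiv.Perm I} (hg : g ∈ fixing (Set.Iic (1/2))) :
    x₀ * g * x₀⁻¹ ∈ fixing (Set.Iic (3/4)) := by
  intro t ht
  have hle : x0inv t ≤ 1/2 := by
    simp only [Set.mem_Iic] at ht
    unfold x0inv
    split_ifs <;> linarith
  show x₀ (g (x₀⁻¹ t)) = t
  rw [hg (x₀⁻¹ t) hle]
  exact x₀.apply_symm_apply t

lemma fixing_anti {U V : Set ℝ} (h : U ⊆ V) : fixing V ≤ fixing U :=
  fun _ hg t ht => hg t (h ht)

lemma x_mem_fixing {n : ℕ} (hn : 2 ≤ n) : x n ∈ fixing (Set.Iic (3/4)) := by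
  induction n, hn using Nat.le_induction with
  | base =>
    rw [x_succ one_ne_zero, x_one]
    refine x₀_conj_mem_fixing fun t ht => Subtype.ext ?_
    show x1fun t = t
    simp only [Set.mem_Iic] at ht
    simp only [x1fun, if_pos ht]
  | succ n hn ih =>
    rw [x_succ (by omega)]
    exact x₀_conj_mem_fixing (fixing_anti (Set.Iic_subset_Iic.mpr (by norm_num)) ih)

lemma x₀_inv_mul_x₁_apply_of_ge (t : I) (ht : 3/4 ≤ (t : ℝ)) : (x₀⁻¹ * x₁) t = t := by
  apply Subtype.ext
  show x0inv (x1fun t) = t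
  unfold x0inv x1fun
  split_ifs <;> linarith

lemma x₁_conj_x {n : ℕ} (hn : 2 ≤ n) : x₁ * x n * x₁⁻¹ = x (n + 1) := by
  have hdisj : (x₀⁻¹ * x₁).Disjoint (x n) := fun t => by
    rcases le_total (t : ℝ) (3/4) with ht | ht
    · exact Or.inr (x_mem_fixing hn t ht)
    · exact Or.inl (x₀_inv_mul_x₁_apply_of_ge t ht)
  calc x₁ * x n * x₁⁻¹ = x₀ * ((x₀⁻¹ * x₁) * x n * (x₀⁻¹ * x₁)⁻¹) * x₀⁻¹ := by group
    _ = x (n + 1) := by rw [hdisj.commute.mul_inv_cancel, x_succ (by omega)]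

lemma semiconjBy_x_of_lt : ∀ {k n : ℕ}, k < n → SemiconjBy (x k) (x n) (x (n + 1))
  | 0, n, h => x_succ (n := n) (by omega) ▸ SemiconjBy.conj_mk _ _
  | 1, n, h => x₁_conj_x (n := n) h ▸ x_one ▸ SemiconjBy.conj_mk _ _
  | k + 2, n + 1, h => by
    rw [x_succ (n := k + 1) (by omega), x_succ (n := n) (by omega),
      x_succ (n := n + 1) (by omega)]
    exact (semiconjBy_x_of_lt (k := k + 1) (n := n) (by omega)).map (MulAut.conj x₀)

lemma pp_cons (a : ℕ) (l : List ℕ) : pp (a :: l) = pp l * x a := by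
  simp [pp]

lemma semiconjBy_x_pp_of_lt {j : ℕ} : ∀ {l : List ℕ}, (∀ i ∈ l, j < i) →
    SemiconjBy (x j) (pp l) (pp (l.map (· + 1)))
  | [], _ => SemiconjBy.one_right _
  | a :: l, h => by
    rw [pp_cons, List.map_cons, pp_cons]
    exact (semiconjBy_x_pp_of_lt fun i hi => h i (List.mem_cons_of_mem _ hi)).mul_right
      (semiconjBy_x_of_lt (h a List.mem_cons_self))

lemma semiconjBy_pp_x_inv : ∀ {l : List ℕ} {j : ℕ}, (∀ m < l.length, l.getD m 0 < j + m) →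
    SemiconjBy (pp l) (x j)⁻¹ (x (j + l.length))⁻¹
  | [], j, _ => by simp [pp]
  | a :: l, j, h => by
    have ha : a < j := by simpa using h 0 (by simp)
    have hl : ∀ m < l.length, l.getD m 0 < (j + 1) + m := fun m hm => by
      have := h (m + 1) (by simpa using hm)
      simp only [List.getD_cons_succ] at this
      omega
    rw [pp_cons, List.length_cons, ← add_assoc, Nat.add_right_comm j]
    exact (semiconjBy_pp_x_inv hl).mul_left (semiconjBy_x_of_lt ha).inv_right

/-- Let `B = x_{i_1}⋯x_{i_n}` be a block (encoded by the list `l`) and let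
`j ≥ 0` with `j ≠ i_1`.  Then there are `k, r ≥ 0` such that `x_j⁻¹ B = B' x_r⁻¹` in `F`,
where `B' = x_{i_1+k}⋯x_{i_n+k}` is the translation of `B` by `k`.  (In Lean's right-to-left
convention the paper equation reads `pp l * (x j)⁻¹ = (x r)⁻¹ * pp (l.map (· + k))`.) -/
theorem stmt6 (l : List ℕ) (hB : IsBlock l) (j : ℕ) (hj : j ≠ l.headI) :
    ∃ k r : ℕ, pp l * (x j)⁻¹ = (x r)⁻¹ * pp (l.map (· + k)) := by
  obtain ⟨hne, hsorted, -, hbound⟩ := hB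
  rcases lt_or_gt_of_ne hj with hlt | hgt
  · obtain ⟨a, l, rfl⟩ := List.exists_cons_of_ne_nil hne
    have hall : ∀ i ∈ a :: l, j < i := by
      rintro i (_ | ⟨_, hi⟩)
      exacts [hlt, hlt.trans_le (List.rel_of_pairwise_cons hsorted hi)]
    exact ⟨1, j, ((semiconjBy_x_pp_of_lt hall).inv_symm_left).symm⟩
  · refine ⟨0, j + l.length, ?_⟩
    rw [show l.map (· + 0) = l by simp]
    exact semiconjBy_pp_x_inv fun m hm => by have := hbound m hm; omega
end
end
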